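/- arXiv:1410.8107 — 4 statements merged into one kernel-verified Lean document; each statement's English description precedes it below -/
import Mathlib

section
/- The set of pairs (Q, P) of d×d complex matrices satisfying QᵀP − PᵀQ = 0 and Q*P − P*Q = 2i·I_d is in bijection with Sp(2d, ℝ) via (Q,P) ↦ the real 2d×2d block matrix [[Re Q, Im Q],[Re P, Im P]]; i.e., the block matrix Y := [[Re Q, Im Q],[Re P, Im P]] satisfies Yᵀ𝕁Y = 𝕁 (with 𝕁 = [[0, I],[−I, 0]]) if and only if QᵀP − PᵀQ = 0 and Q*P − P*Q = 2i·I_d. -/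
/-!
Write `Q = A + iB` and `P = C + iD` with `A, B, C, D` real. Then `Yᵀ𝕁Y` has the blocks
`AᵀC - CᵀA`, `AᵀD - CᵀB`, `BᵀC - DᵀA`, `BᵀD - DᵀB`, while the real and imaginary parts of
`QᵀP - PᵀQ` and `Q*P - P*Q` are the differences and sums of the two diagonal blocks and of the
two off-diagonal blocks. Since real matrices have no `2`-torsion, a pair is determined by its
sum and difference, so the two systems of equations are equivalent.
-/

open Matrix

def Jmat (d : ℕ) : Matrix (Fin d ⊕ Fin d) (Fin d ⊕ Fin d) ℝ :=
  Matrix.fromBlocks 0 1 (-1) 0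

section TorsionFree
variable {G : Type*} [AddCommGroup G] [IsAddTorsionFree G] {a b e : G}

theorem sub_eq_zero_and_add_eq_zero_iff : a - b = 0 ∧ a + b = 0 ↔ a = 0 ∧ b = 0 := by
  refine ⟨fun ⟨hsub, hadd⟩ => ?_, fun ⟨ha, hb⟩ => by simp [ha, hb]⟩
  have ha : 2 • a = (a - b) + (a + b) := by abel
  rw [hsub, hadd, add_zero, two_nsmul_eq_zero] at ha
  exact ⟨ha, by simpa [ha] using hadd⟩

theorem add_eq_zero_and_sub_eq_two_nsmul_iff : a + b = 0 ∧ a - b = 2 • e ↔ a = e ∧ b = -e := by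
  have hadd : (a - e) + (b + e) = a + b := by abel
  have hsub : (a - e) - (b + e) = a - b - 2 • e := by abel
  rw [← hadd, ← sub_eq_zero (b := 2 • e), ← hsub, and_comm, sub_eq_zero_and_add_eq_zero_iff,
    sub_eq_zero, add_eq_zero_iff_eq_neg]

end TorsionFree

namespace Matrix

instance {m n R : Type*} [AddMonoid R] [IsAddTorsionFree R] : IsAddTorsionFree (Matrix m n R) :=
  inferInstanceAs (IsAddTorsionFree (m → n → R))

theorem fromBlocks_transpose_mul_fromBlocks_zero_one_neg_one_zero_mul {m n R : Type*}
    [Fintype m] [Fintype n] [DecidableEq n] [Ring R] (A B C D : Matrix n m R) :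
    (fromBlocks A B C D)ᵀ * (fromBlocks 0 1 (-1) 0 : Matrix (n ⊕ n) (n ⊕ n) R) *
        fromBlocks A B C D =
      fromBlocks (Aᵀ * C - Cᵀ * A) (Aᵀ * D - Cᵀ * B) (Bᵀ * C - Dᵀ * A) (Bᵀ * D - Dᵀ * B) := by
  simp only [fromBlocks_transpose, fromBlocks_multiply, Matrix.mul_zero, Matrix.mul_one,
    Matrix.mul_neg, Matrix.neg_mul, zero_add, add_zero, neg_add_eq_sub]

section Complex
variable {l m n : Type*}

theorem ext_iff_map_re_map_im {M N : Matrix m n ℂ} :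
    M = N ↔ M.map Complex.re = N.map Complex.re ∧ M.map Complex.im = N.map Complex.im := by
  simp only [← Matrix.ext_iff, map_apply, Complex.ext_iff, forall_and]

theorem map_re_conjTranspose (M : Matrix m n ℂ) : Mᴴ.map Complex.re = (M.map Complex.re)ᵀ := by
  ext; simp

theorem map_im_conjTranspose (M : Matrix m n ℂ) : Mᴴ.map Complex.im = -(M.map Complex.im)ᵀ := by
  ext; simp

variable [Fintype m]

theorem map_re_mul (M : Matrix l m ℂ) (N : Matrix m n ℂ) :
    (M * N).map Complex.re =
      M.map Complex.re * N.map Complex.re - M.map Complex.im * N.map Complex.im := by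
  ext; simp [mul_apply, Complex.re_sum]

theorem map_im_mul (M : Matrix l m ℂ) (N : Matrix m n ℂ) :
    (M * N).map Complex.im =
      M.map Complex.re * N.map Complex.im + M.map Complex.im * N.map Complex.re := by
  ext; simp [mul_apply, Complex.im_sum, Finset.sum_add_distrib]

end Complex

end Matrix

/-- For `d×d` complex matrices `Q, P`, the real block matrix
`Y = [[Re Q, Im Q],[Re P, Im P]]` is symplectic (`Yᵀ𝕁Y = 𝕁`) if and only if
`QᵀP − PᵀQ = 0` and `Q*P − P*Q = 2i·I_d`. -/
theorem hagedorn_pair_iff_symplectic {d : ℕ} (Q P : Matrix (Fin d) (Fin d) ℂ) :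
    (Matrix.fromBlocks (Q.map Complex.re) (Q.map Complex.im)
        (P.map Complex.re) (P.map Complex.im))ᵀ * Jmat d *
      Matrix.fromBlocks (Q.map Complex.re) (Q.map Complex.im)
        (P.map Complex.re) (P.map Complex.im) = Jmat d
    ↔ (Qᵀ * P - Pᵀ * Q = 0 ∧ Qᴴ * P - Pᴴ * Q = (2 * Complex.I) • (1 : Matrix (Fin d) (Fin d) ℂ)) := by
  set A := Q.map Complex.re
  set B := Q.map Complex.im
  set C := P.map Complex.re
  set D := P.map Complex.im
  have hre₁ : (Qᵀ * P - Pᵀ * Q).map Complex.re = (Aᵀ * C - Cᵀ * A) - (Bᵀ * D - Dᵀ * B) := by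
    simp only [Matrix.map_sub _ Complex.sub_re, map_re_mul, transpose_map]; abel
  have him₁ : (Qᵀ * P - Pᵀ * Q).map Complex.im = (Aᵀ * D - Cᵀ * B) + (Bᵀ * C - Dᵀ * A) := by
    simp only [Matrix.map_sub _ Complex.sub_im, map_im_mul, transpose_map]; abel
  have hre₂ : (Qᴴ * P - Pᴴ * Q).map Complex.re = (Aᵀ * C - Cᵀ * A) + (Bᵀ * D - Dᵀ * B) := by
    simp only [Matrix.map_sub _ Complex.sub_re, map_re_mul, map_re_conjTranspose,
      map_im_conjTranspose, Matrix.neg_mul]; abel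
  have him₂ : (Qᴴ * P - Pᴴ * Q).map Complex.im = (Aᵀ * D - Cᵀ * B) - (Bᵀ * C - Dᵀ * A) := by
    simp only [Matrix.map_sub _ Complex.sub_im, map_im_mul, map_re_conjTranspose,
      map_im_conjTranspose, Matrix.neg_mul]; abel
  have htwoI : ((2 * Complex.I) • (1 : Matrix (Fin d) (Fin d) ℂ)).map Complex.re = 0 ∧
      ((2 * Complex.I) • (1 : Matrix (Fin d) (Fin d) ℂ)).map Complex.im = 2 • 1 := by
    constructor <;> ext i j <;> by_cases h : i = j <;> simp [one_apply, h]
  rw [Jmat, fromBlocks_transpose_mul_fromBlocks_zero_one_neg_one_zero_mul, fromBlocks_inj,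
    ext_iff_map_re_map_im, ext_iff_map_re_map_im, hre₁, him₁, hre₂, him₂, htwoI.1, htwoI.2,
    Matrix.map_zero _ Complex.zero_re, Matrix.map_zero _ Complex.zero_im]
  have hdiag := sub_eq_zero_and_add_eq_zero_iff (a := Aᵀ * C - Cᵀ * A) (b := Bᵀ * D - Dᵀ * B)
  have hoff := add_eq_zero_and_sub_eq_two_nsmul_iff (a := Aᵀ * D - Cᵀ * B)
    (b := Bᵀ * C - Dᵀ * A) (e := 1)
  tauto
end

section
/- If (Q,P) are d×d complex matrices with QᵀP − PᵀQ = 0 and Q*P − P*Q = 2i·I_d, then Q is invertible and PQ⁻¹ lies in the Siegel upper half space Σ_d: PQ⁻¹ is complex symmetric and its imaginary part is positive-definite. -/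
/-!
If `Qv = 0` then `v*(Q*P − P*Q)v = (Qv)*(Pv) − (Pv)*(Qv) = 0`, while the second condition makes it
`2i·|v|²`; so `Q` is invertible. Conjugating the two conditions by `Q⁻¹` gives
`(PQ⁻¹)ᵀ = PQ⁻¹` and `PQ⁻¹ − (PQ⁻¹)* = 2i·Q⁻¹*Q⁻¹`. For a symmetric `Z` the left side of the
latter is `2i·Im Z`, so `Im Z = Q⁻¹*Q⁻¹`, which is positive definite.
-/

open Matrix
open scoped ComplexOrder

namespace Matrix

variable {n : Type*}

theorem sub_conjTranspose_of_isSymm {Z : Matrix n n ℂ} (hZ : Z.IsSymm) :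
    Z - Zᴴ = (2 * Complex.I) • (Z.map Complex.im).map ((↑) : ℝ → ℂ) := by
  ext i j
  have hji : Z j i = Z i j := by simpa using congrFun (congrFun hZ i) j
  simp only [sub_apply, conjTranspose_apply, hji, Complex.star_def, Complex.sub_conj,
    smul_apply, map_apply, smul_eq_mul]
  push_cast
  ring

variable [Fintype n]

theorem PosDef.of_map_ofReal {𝕜 : Type*} [RCLike 𝕜] {A : Matrix n n ℝ}
    (hA : (A.map ((↑) : ℝ → 𝕜)).PosDef) : A.PosDef := by
  refine .of_dotProduct_mulVec_pos ?_ fun x hx => ?_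
  · ext i j
    simpa using congrFun (congrFun hA.isHermitian i) j
  · have hx' : (fun i => (x i : 𝕜)) ≠ 0 := fun h0 =>
      hx <| funext fun i => by simpa using congrFun h0 i
    have hcast : star (fun i => (x i : 𝕜)) ⬝ᵥ (A.map ((↑) : ℝ → 𝕜) *ᵥ fun i => (x i : 𝕜)) =
        ((star x ⬝ᵥ (A *ᵥ x) : ℝ) : 𝕜) := by
      simp [dotProduct, mulVec]
    simpa [hcast] using hA.dotProduct_mulVec_pos hx'

theorem star_dotProduct_conjTranspose_mul_sub_mulVec {R : Type*} [CommRing R] [StarRing R]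
    (Q P : Matrix n n R) (v : n → R) :
    star v ⬝ᵥ ((Qᴴ * P - Pᴴ * Q) *ᵥ v) =
      star (Q *ᵥ v) ⬝ᵥ (P *ᵥ v) - star (P *ᵥ v) ⬝ᵥ (Q *ᵥ v) := by
  simp only [sub_mulVec, dotProduct_sub, ← mulVec_mulVec, star_mulVec, dotProduct_mulVec]

variable [DecidableEq n]

theorem isUnit_of_conjTranspose_mul_sub_eq_smul_one {K : Type*} [Field K] [StarRing K]
    [PartialOrder K] [StarOrderedRing K] {Q P : Matrix n n K} {c : K} (hc : c ≠ 0)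
    (h : Qᴴ * P - Pᴴ * Q = c • 1) : IsUnit Q := by
  refine mulVec_injective_iff_isUnit.mp <| (injective_iff_map_eq_zero Q.mulVecLin).mpr
    fun v hv => ?_
  have hQv : Q *ᵥ v = 0 := hv
  have hform := star_dotProduct_conjTranspose_mul_sub_mulVec Q P v
  rw [h, hQv, smul_mulVec, one_mulVec, dotProduct_smul, smul_eq_mul] at hform
  simpa [hc] using hform

theorem isSymm_mul_nonsing_inv_of_transpose_mul_eq {R : Type*} [CommRing R]
    {Q P : Matrix n n R} (hQ : IsUnit Q.det) (h : Qᵀ * P = Pᵀ * Q) : (P * Q⁻¹).IsSymm :=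
  calc (P * Q⁻¹)ᵀ = Qᵀ⁻¹ * (Pᵀ * Q) * Q⁻¹ := by
        rw [transpose_mul, transpose_nonsing_inv, Matrix.mul_assoc,
          mul_nonsing_inv_cancel_right Q _ hQ]
    _ = P * Q⁻¹ := by
        rw [← h, nonsing_inv_mul_cancel_left _ _ (isUnit_det_transpose Q hQ)]

theorem mul_nonsing_inv_sub_conjTranspose_eq {R : Type*} [CommRing R] [StarRing R]
    {Q P : Matrix n n R} {c : R} (hQ : IsUnit Q.det) (h : Qᴴ * P - Pᴴ * Q = c • 1) :
    P * Q⁻¹ - (P * Q⁻¹)ᴴ = c • (Q⁻¹ᴴ * Q⁻¹) := by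
  have hQH : Q⁻¹ᴴ * Qᴴ = 1 := by
    rw [← conjTranspose_mul, mul_nonsing_inv _ hQ, conjTranspose_one]
  calc P * Q⁻¹ - (P * Q⁻¹)ᴴ = Q⁻¹ᴴ * (Qᴴ * P - Pᴴ * Q) * Q⁻¹ := by
        rw [conjTranspose_mul, mul_sub, sub_mul, ← Matrix.mul_assoc, hQH, Matrix.one_mul,
          Matrix.mul_assoc, mul_nonsing_inv_cancel_right Q _ hQ]
    _ = c • (Q⁻¹ᴴ * Q⁻¹) := by
        rw [h, Matrix.mul_smul, Matrix.mul_one, Matrix.smul_mul]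

end Matrix

/-- If `Q, P` are `d×d` complex matrices with `QᵀP − PᵀQ = 0` and
`Q*P − P*Q = 2i·I_d`, then `Q` is invertible and `PQ⁻¹` lies in the Siegel upper half
space: `PQ⁻¹` is complex symmetric and its imaginary part is positive-definite. -/
theorem hagedorn_pair_quotient_mem_siegel {d : ℕ} (Q P : Matrix (Fin d) (Fin d) ℂ)
    (h1 : Qᵀ * P - Pᵀ * Q = 0)
    (h2 : Qᴴ * P - Pᴴ * Q = (2 * Complex.I) • (1 : Matrix (Fin d) (Fin d) ℂ)) :
    IsUnit Q ∧ (P * Q⁻¹)ᵀ = P * Q⁻¹ ∧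
      (Matrix.of fun i j => ((P * Q⁻¹) i j).im).PosDef := by
  have h2I : 2 * Complex.I ≠ 0 := by simp
  have hQ : IsUnit Q := isUnit_of_conjTranspose_mul_sub_eq_smul_one h2I h2
  have hQdet : IsUnit Q.det := (isUnit_iff_isUnit_det Q).mp hQ
  have hsymm : (P * Q⁻¹).IsSymm :=
    isSymm_mul_nonsing_inv_of_transpose_mul_eq hQdet (sub_eq_zero.mp h1)
  have him : ((P * Q⁻¹).map Complex.im).map ((↑) : ℝ → ℂ) = Q⁻¹ᴴ * Q⁻¹ :=
    smul_right_injective _ h2I <| (sub_conjTranspose_of_isSymm hsymm).symm.trans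
      (mul_nonsing_inv_sub_conjTranspose_eq hQdet h2)
  have hpos : (((P * Q⁻¹).map Complex.im).map ((↑) : ℝ → ℂ)).PosDef :=
    him ▸ PosDef.conjTranspose_mul_self _
      (mulVec_injective_iff_isUnit.mpr (isUnit_nonsing_inv_iff.mpr hQ))
  exact ⟨hQ, hsymm, PosDef.of_map_ofReal hpos⟩
end

section
/- Conversely (uniqueness of the lift): suppose ξ ∈ sp(2d,ℝ), written in blocks ξ = [[ξ₁₁, ξ₁₂],[ξ₂₁, −ξ₁₁ᵀ]] with ξ₁₂, ξ₂₁ symmetric, satisfies ξ₂₁ − ξ₁₁ᵀ C − C ξ₁₁ − C ξ₁₂ C = −(1/m)C² − S for every C in the Siegel upper half space Σ_d, where m > 0 and S is a fixed real symmetric matrix. Then ξ₁₁ = 0, ξ₁₂ = (1/m)I_d, and ξ₂₁ = −S. -/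
open Matrix

/-- Coercion of a real matrix to a complex matrix. -/
def coeM {d : ℕ} (M : Matrix (Fin d) (Fin d) ℝ) : Matrix (Fin d) (Fin d) ℂ :=
  M.map (fun x => (x : ℂ))

/-! Write `C = A + iB` and compare real parts. At `C = itI` the identity reads
`ξ₂₁ + t² ξ₁₂ = (t²/m) I − S`, and the cases `t = 1, 2` determine `ξ₁₂` and `ξ₂₁`. With these
values the quadratic terms cancel, and at `C = Eᵢᵢ + iI` what is left is
`ξ₁₁ᵀ Eᵢᵢ + Eᵢᵢ ξ₁₁ = 0`, whose `(i, j)` entry is `ξ₁₁ i j` for `j ≠ i` and `2 ξ₁₁ i i`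
for `j = i`. -/

section coeM

variable {d : ℕ}

@[simp] lemma coeM_add (X Y : Matrix (Fin d) (Fin d) ℝ) : coeM (X + Y) = coeM X + coeM Y :=
  Matrix.map_add _ Complex.ofReal_add X Y

@[simp] lemma coeM_sub (X Y : Matrix (Fin d) (Fin d) ℝ) : coeM (X - Y) = coeM X - coeM Y :=
  Matrix.map_sub _ Complex.ofReal_sub X Y

@[simp] lemma coeM_neg (X : Matrix (Fin d) (Fin d) ℝ) : coeM (-X) = -coeM X :=
  Matrix.map_neg _ Complex.ofReal_neg X

@[simp] lemma coeM_mul (X Y : Matrix (Fin d) (Fin d) ℝ) : coeM (X * Y) = coeM X * coeM Y :=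
  Matrix.map_mul (f := Complex.ofRealHom)

@[simp] lemma coeM_smul (r : ℝ) (X : Matrix (Fin d) (Fin d) ℝ) :
    coeM (r • X) = (r : ℂ) • coeM X :=
  map_smul' _ r X Complex.ofReal_mul

lemma eq_of_coeM_add_I_smul_eq {X Y Z W : Matrix (Fin d) (Fin d) ℝ}
    (h : coeM X + Complex.I • coeM Y = coeM Z + Complex.I • coeM W) : X = Z ∧ Y = W := by
  have hij i j := Complex.ext_iff.mp (congrFun₂ h i j)
  simp [coeM] at hij
  exact ⟨ext fun i j => (hij i j).1, ext fun i j => (hij i j).2⟩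

end coeM

def RiccatiEq {d : ℕ} (m : ℝ) (ξ₁₁ ξ₁₂ ξ₂₁ S : Matrix (Fin d) (Fin d) ℝ)
    (C : Matrix (Fin d) (Fin d) ℂ) : Prop :=
  coeM ξ₂₁ - coeM ξ₁₁ᵀ * C - C * coeM ξ₁₁ - C * coeM ξ₁₂ * C = -(1 / (m : ℂ)) • (C * C) - coeM S

lemma RiccatiEq.re {d : ℕ} {m : ℝ} {ξ₁₁ ξ₁₂ ξ₂₁ S A B : Matrix (Fin d) (Fin d) ℝ}
    (h : RiccatiEq m ξ₁₁ ξ₁₂ ξ₂₁ S (coeM A + Complex.I • coeM B)) :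
    ξ₂₁ - ξ₁₁ᵀ * A - A * ξ₁₁ - A * ξ₁₂ * A + B * ξ₁₂ * B = -(1 / m) • (A * A - B * B) - S := by
  unfold RiccatiEq at h
  simp only [add_mul, mul_add, smul_mul_assoc, mul_smul_comm, smul_add, smul_smul,
    Complex.I_mul_I] at h
  have hsplit : coeM (ξ₂₁ - ξ₁₁ᵀ * A - A * ξ₁₁ - A * ξ₁₂ * A + B * ξ₁₂ * B)
        + Complex.I • coeM (-(ξ₁₁ᵀ * B) - B * ξ₁₁ - A * ξ₁₂ * B - B * ξ₁₂ * A)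
      = coeM (-(1 / m) • (A * A - B * B) - S) + Complex.I • coeM (-(1 / m) • (A * B + B * A)) := by
    simp only [coeM_add, coeM_sub, coeM_mul, coeM_smul, coeM_neg]
    push_cast
    linear_combination (norm := module) h
  exact (eq_of_coeM_add_I_smul_eq hsplit).1

lemma eq_zero_of_forall_transpose_mul_single_add_single_mul_eq_zero {n R : Type*} [Fintype n]
    [DecidableEq n] [Semiring R] [IsAddTorsionFree R] {X : Matrix n n R}
    (h : ∀ i, Xᵀ * single i i 1 + single i i 1 * X = 0) : X = 0 := by
  ext i j
  have hij := congrFun₂ (h i) i j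
  rcases eq_or_ne j i with rfl | hne
  · simp only [Matrix.add_apply, mul_single_apply_same, transpose_apply, mul_one,
      single_mul_apply_same, one_mul, Matrix.zero_apply] at hij
    exact (nsmul_eq_zero_iff_right two_ne_zero).mp (by rwa [two_nsmul])
  · simpa [mul_single_apply_of_ne _ _ _ _ _ hne] using hij

theorem lift_uniqueness_general {d : ℕ} (m : ℝ)
    (ξ₁₁ ξ₁₂ ξ₂₁ S : Matrix (Fin d) (Fin d) ℝ)
    (h : ∀ A B : Matrix (Fin d) (Fin d) ℝ, A.IsSymm → B.IsSymm → B.PosDef →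
      coeM ξ₂₁ - coeM ξ₁₁ᵀ * (coeM A + Complex.I • coeM B)
          - (coeM A + Complex.I • coeM B) * coeM ξ₁₁
          - (coeM A + Complex.I • coeM B) * coeM ξ₁₂ * (coeM A + Complex.I • coeM B)
        = -(1 / (m : ℂ)) • ((coeM A + Complex.I • coeM B) * (coeM A + Complex.I • coeM B))
          - coeM S) :
    ξ₁₁ = 0 ∧ ξ₁₂ = (1 / m) • 1 ∧ ξ₂₁ = -S := by
  have hC : ∀ A B : Matrix (Fin d) (Fin d) ℝ, A.IsSymm → B.IsSymm → B.PosDef →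
      RiccatiEq m ξ₁₁ ξ₁₂ ξ₂₁ S (coeM A + Complex.I • coeM B) := h
  have at_imaginary (t : ℝ) (ht : 0 < t) : ξ₂₁ + t ^ 2 • ξ₁₂ = (t ^ 2 / m) • 1 - S := by
    have := (hC 0 (t • 1) isSymm_zero (isSymm_one.smul t) (PosDef.one.smul ht)).re
    simp only [mul_zero, sub_zero, zero_mul, smul_mul_assoc, one_mul, mul_smul_comm, mul_one,
      zero_sub, smul_neg, neg_smul, neg_neg] at this
    linear_combination (norm := module) this
  have h₁ := at_imaginary 1 one_pos
  have h₂ := at_imaginary 2 two_pos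
  have hξ₁₂ : ξ₁₂ = (1 / m) • 1 := by
    linear_combination (norm := module) (1 / 3 : ℝ) • (h₂ - h₁)
  have hξ₂₁ : ξ₂₁ = -S := by
    linear_combination (norm := module) h₁ - hξ₁₂
  refine ⟨eq_zero_of_forall_transpose_mul_single_add_single_mul_eq_zero fun i => ?_, hξ₁₂, hξ₂₁⟩
  have := (hC (single i i 1) 1 (transpose_single i i 1) isSymm_one PosDef.one).re
  rw [hξ₁₂, hξ₂₁] at this
  simp only [mul_smul_comm, smul_mul_assoc, mul_one] at this
  linear_combination (norm := module) -this

/-- **uniqueness of the lift.** Suppose the element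
`ξ = [[ξ₁₁, ξ₁₂],[ξ₂₁, −ξ₁₁ᵀ]] ∈ sp(2d,ℝ)` (with `ξ₁₂, ξ₂₁` symmetric) satisfies
`ξ₂₁ − ξ₁₁ᵀ C − C ξ₁₁ − C ξ₁₂ C = −(1/m)C² − S` for every `C = A + iB` in the Siegel
upper half space `Σ_d`, where `m > 0` and `S` is a fixed real symmetric matrix.
Then `ξ₁₁ = 0`, `ξ₁₂ = (1/m)I`, and `ξ₂₁ = −S`. -/
theorem lift_uniqueness {d : ℕ} (m : ℝ) (hm : 0 < m)
    (ξ₁₁ ξ₁₂ ξ₂₁ S : Matrix (Fin d) (Fin d) ℝ)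
    (hξ₁₂ : ξ₁₂.IsSymm) (hξ₂₁ : ξ₂₁.IsSymm) (hS : S.IsSymm)
    (h : ∀ A B : Matrix (Fin d) (Fin d) ℝ, A.IsSymm → B.IsSymm → B.PosDef →
      coeM ξ₂₁ - coeM ξ₁₁ᵀ * (coeM A + Complex.I • coeM B)
          - (coeM A + Complex.I • coeM B) * coeM ξ₁₁
          - (coeM A + Complex.I • coeM B) * coeM ξ₁₂ * (coeM A + Complex.I • coeM B)
        = -(1 / (m : ℂ)) • ((coeM A + Complex.I • coeM B) * (coeM A + Complex.I • coeM B))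
          - coeM S) :
    ξ₁₁ = 0 ∧ ξ₁₂ = (1 / m) • 1 ∧ ξ₂₁ = -S :=
  lift_uniqueness_general m ξ₁₁ ξ₁₂ ξ₂₁ S h
end

section
/- Consider the phase space T*ℝ^d × Σ_d with symplectic form Ω_ħ = dq ∧ dp + (ħ/4) dB⁻¹_{jk} ∧ dA_{jk} (summation over j,k), ħ > 0, and the Poisson bracket {F,G}_ħ = ∂F/∂q·∂G/∂p − ∂G/∂q·∂F/∂p + (4/ħ)(∂F/∂B⁻¹_{jk} ∂G/∂A_{jk} − ∂G/∂B⁻¹_{jk} ∂F/∂A_{jk}). For d = 3, the components of the semiclassical angular momentum vector J⃗_ħ = q × p − (ħ/2)[B⁻¹, A]^∨ satisfy {(J⃗_ħ)_i, (J⃗_ħ)_j}_ħ = (J⃗_ħ)_k for any cyclic permutation (i,j,k) of (1,2,3), where ∨ is the inverse of the hat map. -/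
noncomputable section

/-- The semiclassical state space `{(q, p, B⁻¹, A)}` for `d = 3`: here the third
component is the matrix `B⁻¹` (the coordinate conjugate to `A`) and the fourth is `A`. -/
abbrev SCState : Type :=
  (Fin 3 → ℝ) × (Fin 3 → ℝ) × (Fin 3 → Fin 3 → ℝ) × (Fin 3 → Fin 3 → ℝ)

/-- Unit coordinate direction in `q`. -/
def dirq (i : Fin 3) : SCState := (Pi.single i 1, 0, 0, 0)

/-- Unit coordinate direction in `p`. -/
def dirp (i : Fin 3) : SCState := (0, Pi.single i 1, 0, 0)

/-- The unit coordinate direction for the (symmetric-matrix) coordinate `M_{jk} = M_{kj}`: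
the symmetrized elementary matrix `(E_{jk} + E_{kj})/2` (which is `E_{jj}` when `j = k`). -/
def symDir (j k : Fin 3) : Fin 3 → Fin 3 → ℝ := fun a b =>
  (if a = j ∧ b = k then (1 : ℝ) / 2 else 0) + (if a = k ∧ b = j then (1 : ℝ) / 2 else 0)

/-- Coordinate direction in the `B⁻¹` block. -/
def dirBinv (j k : Fin 3) : SCState := (0, 0, symDir j k, 0)

/-- Coordinate direction in the `A` block. -/
def dirA (j k : Fin 3) : SCState := (0, 0, 0, symDir j k)

/-- Matrix commutator `[X, Y] = XY − YX` (entrywise). -/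
def mcomm (X Y : Fin 3 → Fin 3 → ℝ) : Fin 3 → Fin 3 → ℝ := fun i j =>
  ∑ l, (X i l * Y l j - Y i l * X l j)

/-- Inverse hat map `∨ : so(3) → ℝ³`. -/
def vee (M : Fin 3 → Fin 3 → ℝ) : Fin 3 → ℝ := ![M 2 1, M 0 2, M 1 0]

/-- The `i`-th component of the semiclassical angular momentum vector
`J⃗_ħ = q × p − (ħ/2)[B⁻¹, A]^∨` as a function on the state space. -/
def Jvec (hbar : ℝ) (i : Fin 3) (s : SCState) : ℝ :=
  crossProduct s.1 s.2.1 i - hbar / 2 * vee (mcomm s.2.2.1 s.2.2.2) i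

/-- The semiclassical Poisson bracket
`{F,G}_ħ = ∂F/∂q·∂G/∂p − ∂G/∂q·∂F/∂p
  + (4/ħ) Σ_{jk} (∂F/∂B⁻¹_{jk} ∂G/∂A_{jk} − ∂G/∂B⁻¹_{jk} ∂F/∂A_{jk})`,
where matrix partial derivatives are taken with respect to the symmetric-matrix
coordinates. -/
def pBracket (hbar : ℝ) (F G : SCState → ℝ) (s : SCState) : ℝ :=
  (∑ i, (fderiv ℝ F s (dirq i) * fderiv ℝ G s (dirp i)
      - fderiv ℝ G s (dirq i) * fderiv ℝ F s (dirp i)))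
  + (4 / hbar) * ∑ j, ∑ k,
      (fderiv ℝ F s (dirBinv j k) * fderiv ℝ G s (dirA j k)
        - fderiv ℝ G s (dirBinv j k) * fderiv ℝ F s (dirA j k))

/-!
Each `Jvec hbar i` is a quadratic form on the state space, so its derivative is read off its
polarization `JvecBilin`. The bracket then splits into an orbital part, the classical identity
`{(q × p)_i, (q × p)_{i+1}} = (q × p)_{i+2}`, and a matrix part whose prefactor
`(4/ħ)(ħ/2)² = ħ` leaves `-(ħ/2)[B⁻¹, A]^∨_{i+2}`; the latter identity is a finite computation
along the symmetrised directions `symDir`, in which the symmetry of `B⁻¹` and `A` lets the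
off-diagonal entries pair up.
-/

open Finset

section FDerivBilinear

variable {𝕜 : Type*} [NontriviallyNormedField 𝕜] [CompleteSpace 𝕜]
  {E : Type*} [NormedAddCommGroup E] [NormedSpace 𝕜 E] [FiniteDimensional 𝕜 E]
  {G : Type*} [NormedAddCommGroup G] [NormedSpace 𝕜 G]

theorem IsBilinearMap.fderiv_diag_apply {f : E → E → G} (hf : IsBilinearMap 𝕜 f) (s v : E) :
    fderiv 𝕜 (fun x => f x x) s v = f s v + f v s := by
  have h := hf.toContinuousBilinearMap.fderiv_of_bilinear (x := s)
    differentiableAt_id differentiableAt_id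
  simpa [fderiv_id] using congrArg (· v) h

end FDerivBilinear

theorem vee_add (M N : Fin 3 → Fin 3 → ℝ) : vee (M + N) = vee M + vee N := by
  ext i; fin_cases i <;> rfl

theorem vee_smul (c : ℝ) (M : Fin 3 → Fin 3 → ℝ) : vee (c • M) = c • vee M := by
  ext i; fin_cases i <;> rfl

@[simp] theorem vee_zero : vee 0 = 0 := by
  ext i; fin_cases i <;> rfl

@[simp] theorem mcomm_zero_left (Y : Fin 3 → Fin 3 → ℝ) : mcomm 0 Y = 0 := by
  ext; simp [mcomm]

@[simp] theorem mcomm_zero_right (X : Fin 3 → Fin 3 → ℝ) : mcomm X 0 = 0 := by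
  ext; simp [mcomm]

theorem isBilinearMap_mcomm : IsBilinearMap ℝ mcomm where
  add_left X X' Y := by
    ext a b; simp only [mcomm, Pi.add_apply, ← sum_add_distrib]; congr 1; ext; ring
  smul_left c X Y := by
    ext a b; simp only [mcomm, Pi.smul_apply, smul_eq_mul, mul_sum]; congr 1; ext; ring
  add_right X Y Y' := by
    ext a b; simp only [mcomm, Pi.add_apply, ← sum_add_distrib]; congr 1; ext; ring
  smul_right c X Y := by
    ext a b; simp only [mcomm, Pi.smul_apply, smul_eq_mul, mul_sum]; congr 1; ext; ring

-- `Jvec hbar i s` unfolds to `JvecBilin hbar i s s`.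
def JvecBilin (hbar : ℝ) (i : Fin 3) (s t : SCState) : ℝ :=
  crossProduct s.1 t.2.1 i - hbar / 2 * vee (mcomm s.2.2.1 t.2.2.2) i

theorem isBilinearMap_JvecBilin (hbar : ℝ) (i : Fin 3) : IsBilinearMap ℝ (JvecBilin hbar i) where
  add_left s s' t := by
    simp only [JvecBilin, Prod.fst_add, Prod.snd_add, map_add, LinearMap.add_apply,
      isBilinearMap_mcomm.add_left, vee_add, Pi.add_apply]; ring
  smul_left c s t := by
    simp only [JvecBilin, Prod.smul_fst, Prod.smul_snd, map_smul, LinearMap.smul_apply,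
      isBilinearMap_mcomm.smul_left, vee_smul, Pi.smul_apply, smul_eq_mul]; ring
  add_right s t t' := by
    simp only [JvecBilin, Prod.fst_add, Prod.snd_add, map_add,
      isBilinearMap_mcomm.add_right, vee_add, Pi.add_apply]; ring
  smul_right c s t := by
    simp only [JvecBilin, Prod.smul_fst, Prod.smul_snd, map_smul,
      isBilinearMap_mcomm.smul_right, vee_smul, Pi.smul_apply, smul_eq_mul]; ring

theorem fderiv_Jvec_apply (hbar : ℝ) (i : Fin 3) (s v : SCState) :
    fderiv ℝ (Jvec hbar i) s v = JvecBilin hbar i s v + JvecBilin hbar i v s :=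
  (isBilinearMap_JvecBilin hbar i).fderiv_diag_apply s v

theorem fderiv_Jvec_dirq (hbar : ℝ) (i a : Fin 3) (s : SCState) :
    fderiv ℝ (Jvec hbar i) s (dirq a) = crossProduct (Pi.single a 1) s.2.1 i := by
  simp [fderiv_Jvec_apply, JvecBilin, dirq]

theorem fderiv_Jvec_dirp (hbar : ℝ) (i a : Fin 3) (s : SCState) :
    fderiv ℝ (Jvec hbar i) s (dirp a) = crossProduct s.1 (Pi.single a 1) i := by
  simp [fderiv_Jvec_apply, JvecBilin, dirp]

theorem fderiv_Jvec_dirBinv (hbar : ℝ) (i a b : Fin 3) (s : SCState) :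
    fderiv ℝ (Jvec hbar i) s (dirBinv a b) =
      -(hbar / 2 * vee (mcomm (symDir a b) s.2.2.2) i) := by
  simp [fderiv_Jvec_apply, JvecBilin, dirBinv]

theorem fderiv_Jvec_dirA (hbar : ℝ) (i a b : Fin 3) (s : SCState) :
    fderiv ℝ (Jvec hbar i) s (dirA a b) =
      -(hbar / 2 * vee (mcomm s.2.2.1 (symDir a b)) i) := by
  simp [fderiv_Jvec_apply, JvecBilin, dirA]

theorem pBracket_Jvec (hbar : ℝ) (i j : Fin 3) (s : SCState) :
    pBracket hbar (Jvec hbar i) (Jvec hbar j) s =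
      ∑ a, (crossProduct (Pi.single a 1) s.2.1 i * crossProduct s.1 (Pi.single a 1) j
        - crossProduct (Pi.single a 1) s.2.1 j * crossProduct s.1 (Pi.single a 1) i)
      + 4 / hbar * (hbar / 2) ^ 2 * ∑ a, ∑ b,
        (vee (mcomm (symDir a b) s.2.2.2) i * vee (mcomm s.2.2.1 (symDir a b)) j
          - vee (mcomm (symDir a b) s.2.2.2) j * vee (mcomm s.2.2.1 (symDir a b)) i) := by
  simp only [pBracket, fderiv_Jvec_dirq, fderiv_Jvec_dirp, fderiv_Jvec_dirBinv, fderiv_Jvec_dirA,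
    mul_assoc, mul_sum]
  congr 1
  refine sum_congr rfl fun a _ => sum_congr rfl fun b _ => ?_
  ring

theorem sum_cross_single_bracket (q p : Fin 3 → ℝ) (i : Fin 3) :
    ∑ a, (crossProduct (Pi.single a 1) p i * crossProduct q (Pi.single a 1) (i + 1)
      - crossProduct (Pi.single a 1) p (i + 1) * crossProduct q (Pi.single a 1) i)
      = crossProduct q p (i + 2) := by
  fin_cases i <;>
    simp only [Fin.sum_univ_three, cross_apply, Pi.single_apply, Matrix.cons_val, Fin.isValue,
      Fin.reduceFinMk, Fin.zero_eta, Fin.mk_one, Fin.reduceAdd, Fin.reduceEq, ↓reduceIte] <;> ring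

theorem sum_vee_mcomm_symDir_bracket (X Y : Matrix (Fin 3) (Fin 3) ℝ) (hX : X.IsSymm)
    (hY : Y.IsSymm) (i : Fin 3) :
    ∑ a, ∑ b, (vee (mcomm (symDir a b) Y) i * vee (mcomm X (symDir a b)) (i + 1)
      - vee (mcomm (symDir a b) Y) (i + 1) * vee (mcomm X (symDir a b)) i)
      = -(vee (mcomm X Y) (i + 2) / 2) := by
  have hX' : ∀ a b, X a b = X b a := fun a b => hX.apply b a
  have hY' : ∀ a b, Y a b = Y b a := fun a b => hY.apply b a
  fin_cases i <;>
    simp only [vee, mcomm, symDir, Fin.sum_univ_three, Matrix.cons_val, Fin.isValue,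
      Fin.reduceFinMk, Fin.zero_eta, Fin.mk_one, Fin.reduceAdd, Fin.reduceEq, and_true, true_and,
      and_false, false_and, ↓reduceIte, hX' 1 0, hX' 2 0, hX' 2 1, hY' 1 0, hY' 2 0, hY' 2 1] <;>
    ring

theorem four_div_mul_half_sq (x : ℝ) : 4 / x * (x / 2) ^ 2 = x := by
  rcases eq_or_ne x 0 with rfl | hx
  · simp
  · field_simp; ring

theorem semiclassical_angular_momentum_poisson_general (hbar : ℝ)
    (q p : Fin 3 → ℝ) (A B : Matrix (Fin 3) (Fin 3) ℝ)
    (hA : A.IsSymm) (hB : B.IsSymm)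
    (i j k : Fin 3)
    (hcyc : (i, j, k) = ((0 : Fin 3), (1 : Fin 3), (2 : Fin 3))
      ∨ (i, j, k) = (1, 2, 0) ∨ (i, j, k) = (2, 0, 1)) :
    pBracket hbar (Jvec hbar i) (Jvec hbar j)
        (q, p, fun a b => B⁻¹ a b, fun a b => A a b)
      = Jvec hbar k (q, p, fun a b => B⁻¹ a b, fun a b => A a b) := by
  obtain ⟨rfl, rfl⟩ : j = i + 1 ∧ k = i + 2 := by
    rcases hcyc with h | h | h <;> simp only [Prod.mk.injEq] at h <;>
      obtain ⟨rfl, rfl, rfl⟩ := h <;> decide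
  rw [pBracket_Jvec, four_div_mul_half_sq, sum_cross_single_bracket,
    sum_vee_mcomm_symDir_bracket B⁻¹ A hB.inv hA, Jvec]
  ring

/-- For `d = 3`, the components of the semiclassical angular momentum
vector `J⃗_ħ = q × p − (ħ/2)[B⁻¹,A]^∨` satisfy `{(J⃗_ħ)_i, (J⃗_ħ)_j}_ħ = (J⃗_ħ)_k` for any
cyclic permutation `(i,j,k)` of `(1,2,3)`, with respect to the semiclassical Poisson
bracket, at every state `(q, p, A, B)` with `A, B` symmetric and `B` positive-definite. -/
theorem semiclassical_angular_momentum_poisson (hbar : ℝ) (hhbar : 0 < hbar)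
    (q p : Fin 3 → ℝ) (A B : Matrix (Fin 3) (Fin 3) ℝ)
    (hA : A.IsSymm) (hB : B.IsSymm) (hBpos : B.PosDef)
    (i j k : Fin 3)
    (hcyc : (i, j, k) = ((0 : Fin 3), (1 : Fin 3), (2 : Fin 3))
      ∨ (i, j, k) = (1, 2, 0) ∨ (i, j, k) = (2, 0, 1)) :
    pBracket hbar (Jvec hbar i) (Jvec hbar j)
        (q, p, fun a b => B⁻¹ a b, fun a b => A a b)
      = Jvec hbar k (q, p, fun a b => B⁻¹ a b, fun a b => A a b) :=
  semiclassical_angular_momentum_poisson_general hbar q p A B hA hB i j k hcyc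
end
end
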